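/- arXiv:1904.11149 — 7 statements merged into one kernel-verified Lean document; each statement's English description precedes it below -/
import Mathlib

section
/- For z > 0 and n ≥ 1, the self-avoiding walk susceptibility on K_n satisfies χ_z^{(n)} = z^{n-1} e^{1/z} Γ(n, 1/z), where Γ is the upper incomplete gamma function. -/
open MeasureTheory Finset

/-- `c_N^{(n)} = (n-1)!/(n-1-N)!`, the number of `N`-step self-avoiding walks on `K_n`. -/
noncomputable def sawCount (n N : ℕ) : ℝ :=
  (Nat.factorial (n - 1) : ℝ) / (Nat.factorial (n - 1 - N) : ℝ)

/-- The susceptibility `χ_z^{(n)} = ∑_{N=0}^{n-1} c_N^{(n)} z^N`. -/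
noncomputable def chi (n : ℕ) (z : ℝ) : ℝ :=
  ∑ N ∈ Finset.range n, sawCount n N * z ^ N

/-- The upper incomplete gamma function `Γ(s,x) = ∫_x^∞ t^{s-1} e^{-t} dt`. -/
noncomputable def upperGamma (s x : ℝ) : ℝ :=
  ∫ t in Set.Ioi x, t ^ (s - 1) * Real.exp (-t)

/-!
Removing the first vertex of a walk on `K_{n+1}` gives `χ^{(n+1)} = 1 + n z χ^{(n)}`, while
integrating by parts gives `Γ(n+1, x) = n Γ(n, x) + xⁿ e^{-x}`. With `x = 1/z` the right-hand side
`z^{n-1} e^{1/z} Γ(n, 1/z)` therefore satisfies the same recursion, and both sides equal `1` at `n = 1`.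
-/

lemma integrableOn_rpow_mul_exp_neg_Ioi {s x : ℝ} (hs : 0 < s) (hx : 0 ≤ x) :
    IntegrableOn (fun t : ℝ => t ^ (s - 1) * Real.exp (-t)) (Set.Ioi x) :=
  ((Real.GammaIntegral_convergent hs).mono_set (Set.Ioi_subset_Ioi hx)).congr_fun
    (fun _ _ => mul_comm _ _) measurableSet_Ioi

lemma upperGamma_one (x : ℝ) : upperGamma 1 x = Real.exp (-x) := by
  simpa [upperGamma] using integral_exp_neg_Ioi x

lemma upperGamma_add_one {s x : ℝ} (hs : 0 < s) (hx : 0 < x) :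
    upperGamma (s + 1) x = s * upperGamma s x + x ^ s * Real.exp (-x) := by
  have hderiv : ∀ t ∈ Set.Ici x, HasDerivAt (fun t => -(t ^ s * Real.exp (-t)))
      (t ^ (s + 1 - 1) * Real.exp (-t) - s * (t ^ (s - 1) * Real.exp (-t))) t := by
    intro t ht
    have hpow := Real.hasDerivAt_rpow_const (p := s) (Or.inl (hx.trans_le ht).ne')
    refine (hpow.mul (hasDerivAt_neg t).exp).neg.congr_deriv ?_
    rw [add_sub_cancel_right]
    ring
  have hint_succ := integrableOn_rpow_mul_exp_neg_Ioi (s := s + 1) (by linarith) hx.le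
  have hint := (integrableOn_rpow_mul_exp_neg_Ioi hs hx.le).const_mul s
  have hlim : Filter.Tendsto (fun t : ℝ => -(t ^ s * Real.exp (-t))) Filter.atTop (nhds 0) := by
    simpa using (tendsto_rpow_mul_exp_neg_mul_atTop_nhds_zero s 1 one_pos).neg
  have hparts := integral_Ioi_of_hasDerivAt_of_tendsto' hderiv (hint_succ.sub hint) hlim
  rw [integral_sub hint_succ hint, integral_const_mul] at hparts
  rw [upperGamma, upperGamma]
  linarith

lemma sawCount_succ_succ (n N : ℕ) (hN : N < n) :
    sawCount (n + 1) (N + 1) = n * sawCount n N := by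
  obtain ⟨m, rfl⟩ : ∃ m, n = m + 1 := ⟨n - 1, by omega⟩
  rw [sawCount, sawCount, show m + 1 + 1 - 1 - (N + 1) = m + 1 - 1 - N by omega,
    Nat.add_sub_cancel, Nat.factorial_succ]
  push_cast
  ring

lemma sawCount_zero (n : ℕ) : sawCount n 0 = 1 :=
  div_self (by positivity)

lemma chi_succ (n : ℕ) (z : ℝ) : chi (n + 1) z = 1 + n * z * chi n z := by
  rw [chi, sum_range_succ', sawCount_zero, pow_zero, mul_one, add_comm, chi, mul_sum]
  congr 1
  refine sum_congr rfl fun N hN => ?_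
  rw [sawCount_succ_succ n N (mem_range.mp hN), pow_succ]
  ring

theorem chi_eq_upperGamma (n : ℕ) (hn : 1 ≤ n) (z : ℝ) (hz : 0 < z) :
    chi n z = z ^ (n - 1) * Real.exp (1 / z) * upperGamma n (1 / z) := by
  induction n, hn using Nat.le_induction with
  | base => simp [chi, sawCount_zero, upperGamma_one, ← Real.exp_add]
  | succ n hn ih =>
    have hrec := upperGamma_add_one (s := n) (by positivity) (one_div_pos.mpr hz)
    have hzn : z ^ n * (1 / z) ^ (n : ℝ) = 1 := by
      rw [Real.rpow_natCast, ← mul_pow, mul_one_div_cancel hz.ne', one_pow]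
    have hexp : Real.exp (1 / z) * Real.exp (-(1 / z)) = 1 := by
      rw [← Real.exp_add, add_neg_cancel, Real.exp_zero]
    have hzpow : z * z ^ (n - 1) = z ^ n := by
      rw [← pow_succ', Nat.sub_add_cancel hn]
    rw [chi_succ, ih, Nat.add_sub_cancel, Nat.cast_succ, hrec]
    linear_combination -(z ^ n * (1 / z) ^ (n : ℝ)) * hexp - hzn
      + n * Real.exp (1 / z) * upperGamma n (1 / z) * hzpow
end

section
/- For fixed s > 1 and z_n = 1/(s n), the susceptibility χ_{z_n}^{(n)} converges to s/(s-1) as n → ∞. -/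
open Finset Filter

noncomputable def chiTerm (s : ℝ) (n N : ℕ) : ℝ :=
  ∏ j ∈ Finset.range N, ((n - 1 - j : ℕ) : ℝ) / (s * n)

lemma chiTerm_eq (s : ℝ) {n N : ℕ} (hN : N < n) :
    chiTerm s n N = sawCount n N * (1 / (s * n)) ^ N := by
  have hle : N ≤ n - 1 := Nat.le_sub_one_of_lt hN
  have hfac : ((n - 1 - N).factorial : ℝ) * (Nat.descFactorial (n - 1) N : ℝ)
      = ((n - 1).factorial : ℝ) := by
    exact_mod_cast congrArg (Nat.cast : ℕ → ℝ) (Nat.factorial_mul_descFactorial hle)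
  have hsaw : sawCount n N = (Nat.descFactorial (n - 1) N : ℝ) := by
    rw [sawCount, eq_comm, eq_div_iff (by positivity), mul_comm, hfac]
  rw [hsaw, Nat.descFactorial_eq_prod_range]
  push_cast
  rw [chiTerm, Finset.prod_div_distrib, Finset.prod_const, div_eq_mul_inv, one_div, inv_pow, Finset.card_range]

lemma chiTerm_zero (s : ℝ) {n N : ℕ} (hn : 1 ≤ n) (hN : n ≤ N) :
    chiTerm s n N = 0 := by
  apply Finset.prod_eq_zero (i := n - 1) (Finset.mem_range.2 (by omega))
  have : n - 1 - (n - 1) = 0 := Nat.sub_self _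
  rw [this]
  simp

lemma chi_eq_tsum (s : ℝ) {n : ℕ} (hn : 1 ≤ n) :
    chi n (1 / (s * n)) = ∑' N, chiTerm s n N := by
  rw [tsum_eq_sum (s := Finset.range n) (fun N hN => chiTerm_zero s hn
    (le_of_not_gt (fun h => hN (Finset.mem_range.2 h))))]
  exact (Finset.sum_congr rfl fun N hN => (chiTerm_eq s (Finset.mem_range.1 hN))).symm

theorem chi_subcritical_limit (s : ℝ) (hs : 1 < s) :
    Tendsto (fun n : ℕ => chi n (1 / (s * n))) atTop (nhds (s / (s - 1))) := by
  have hs0 : 0 < s := lt_trans one_pos hs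
  have hgeom : ∑' N : ℕ, (1 / s) ^ N = s / (s - 1) := by
    rw [tsum_geometric_of_lt_one (by positivity) (by
      rw [div_lt_one hs0]; exact hs)]
    have h1 : s ≠ 0 := ne_of_gt hs0
    have h2 : s - 1 ≠ 0 := by intro h; apply absurd hs; linarith
    have h3 : 1 - 1 / s ≠ 0 := by
      intro h
      have : 1 / s = 1 := by linarith
      rw [div_eq_one_iff_eq h1] at this
      exact absurd hs (by linarith)
    field_simp
  have key : Tendsto (fun n : ℕ => ∑' N, chiTerm s n N) atTop (nhds (s / (s - 1))) := by
    rw [← hgeom]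
    apply tendsto_tsum_of_dominated_convergence (bound := fun N => (1 / s) ^ N)
      (summable_geometric_of_lt_one (by positivity) (by rw [div_lt_one hs0]; exact hs))
    · intro N
      rw [show (1 / s) ^ N = (∏ _j ∈ Finset.range N, (1 / s)) from by simp]
      apply tendsto_finset_prod
      intro j _
      have heq : (fun n : ℕ => ((n - 1 - j : ℕ) : ℝ) / (s * n)) =ᶠ[atTop]
          fun n : ℕ => 1 / s - ((1 + j : ℝ) / s) * (1 / (n : ℝ)) := by
        filter_upwards [eventually_ge_atTop (j + 2)] with n hn
        have h1 : ((n - 1 - j : ℕ) : ℝ) = (n : ℝ) - (1 + j) := by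
          have : n - 1 - j = n - (1 + j) := by omega
          rw [this, Nat.cast_sub (by omega)]
          push_cast; ring
        have hn0 : (n : ℝ) ≠ 0 := Nat.cast_ne_zero.2 (by omega)
        rw [h1]
        have hsn : s * (n : ℝ) ≠ 0 := mul_ne_zero (ne_of_gt hs0) hn0
        field_simp
      apply Tendsto.congr' heq.symm
      have : Tendsto (fun n : ℕ => ((1 + j : ℝ) / s) * (1 / (n : ℝ))) atTop (nhds 0) := by
        simpa using (tendsto_one_div_atTop_nhds_zero_nat.const_mul ((1 + j : ℝ) / s))
      simpa using (tendsto_const_nhds (x := 1 / s)).sub this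
    · filter_upwards [eventually_ge_atTop 1] with n hn N
      have hn0 : (0 : ℝ) < (n : ℝ) := by exact_mod_cast hn
      have hterm : ∀ j ∈ Finset.range N,
          0 ≤ ((n - 1 - j : ℕ) : ℝ) / (s * n) ∧ ((n - 1 - j : ℕ) : ℝ) / (s * n) ≤ 1 / s := by
        intro j _
        constructor
        · positivity
        · rw [div_le_div_iff₀ (by positivity) hs0]
          have hle : ((n - 1 - j : ℕ) : ℝ) ≤ (n : ℝ) := Nat.cast_le.2 (by omega)
          nlinarith
      have hnonneg : 0 ≤ chiTerm s n N :=
        Finset.prod_nonneg fun j hj => (hterm j hj).1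
      rw [Real.norm_eq_abs, abs_of_nonneg hnonneg,
        show (1 / s) ^ N = (∏ _j ∈ Finset.range N, (1 / s)) from by simp]
      exact Finset.prod_le_prod (fun j hj => (hterm j hj).1) (fun j hj => (hterm j hj).2)
  apply key.congr'
  filter_upwards [eventually_ge_atTop 1] with n hn
  exact (chi_eq_tsum s hn).symm
end

section
/- For 0 < y < n, the lower incomplete gamma function satisfies γ(n, y) = ∫_0^y t^{n-1} e^{-t} dt ≤ y^n e^{-y}/(n - y). -/
open MeasureTheory

/-!
Split the integrand as `t ^ (s - y - 1) * (t ^ y * e^{-t})`. The factor `t ^ y * e^{-t}` attains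
its maximum `y ^ y * e^{-y}` at `t = y`, and what remains integrates to `y ^ (s - y) / (s - y)`.
-/

namespace Real

theorem rpow_mul_exp_neg_le {a t : ℝ} (ha : 0 < a) (ht : 0 < t) :
    t ^ a * exp (-t) ≤ a ^ a * exp (-a) := by
  have hlog : a * log (t / a) ≤ t - a := by
    calc a * log (t / a) ≤ a * (t / a - 1) :=
          mul_le_mul_of_nonneg_left (log_le_sub_one_of_pos (div_pos ht ha)) ha.le
      _ = t - a := by field_simp
  rw [log_div ht.ne' ha.ne'] at hlog
  rw [rpow_def_of_pos ht, rpow_def_of_pos ha, ← exp_add, ← exp_add, exp_le_exp]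
  linarith

theorem integral_rpow_sub_one_Ioc {r y : ℝ} (hr : 0 < r) (hy : 0 ≤ y) :
    ∫ t in Set.Ioc 0 y, t ^ (r - 1) = y ^ r / r := by
  rw [← intervalIntegral.integral_of_le hy, integral_rpow (Or.inl (by linarith)),
    sub_add_cancel, zero_rpow hr.ne', sub_zero]

theorem integrableOn_rpow_sub_one_Ioc {r y : ℝ} (hr : 0 < r) (hy : 0 ≤ y) :
    IntegrableOn (fun t => t ^ (r - 1)) (Set.Ioc 0 y) :=
  (intervalIntegrable_iff_integrableOn_Ioc_of_le hy).mp
    (intervalIntegral.intervalIntegrable_rpow' (by linarith))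

end Real

open Real in
/-- For real `s` with `0 < y < s`, the lower incomplete gamma function satisfies
`γ(s,y) = ∫_0^y t^{s-1} e^{-t} dt ≤ y^s e^{-y} / (s - y)`. -/
theorem lowerGamma_bound (s y : ℝ) (hy : 0 < y) (hys : y < s) :
    (∫ t in Set.Ioc (0 : ℝ) y, t ^ (s - 1) * Real.exp (-t)) ≤
      y ^ s * Real.exp (-y) / (s - y) := by
  have hsy : 0 < s - y := sub_pos.mpr hys
  have hbound : ∀ t ∈ Set.Ioc (0 : ℝ) y,
      t ^ (s - 1) * exp (-t) ≤ y ^ y * exp (-y) * t ^ (s - y - 1) := by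
    rintro t ⟨ht, -⟩
    calc t ^ (s - 1) * exp (-t) = t ^ (s - y - 1) * (t ^ y * exp (-t)) := by
          rw [← mul_assoc, ← rpow_add ht]; ring_nf
      _ ≤ t ^ (s - y - 1) * (y ^ y * exp (-y)) :=
          mul_le_mul_of_nonneg_left (rpow_mul_exp_neg_le hy ht) (rpow_nonneg ht.le _)
      _ = y ^ y * exp (-y) * t ^ (s - y - 1) := mul_comm _ _
  have hint : IntegrableOn (fun t => t ^ (s - 1) * exp (-t)) (Set.Ioc 0 y) := by
    simpa only [mul_comm] using
      (GammaIntegral_convergent (hy.trans hys)).mono_set Set.Ioc_subset_Ioi_self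
  calc (∫ t in Set.Ioc (0 : ℝ) y, t ^ (s - 1) * exp (-t))
      ≤ ∫ t in Set.Ioc (0 : ℝ) y, y ^ y * exp (-y) * t ^ (s - y - 1) :=
        setIntegral_mono_on hint ((integrableOn_rpow_sub_one_Ioc hsy hy.le).const_mul _)
          measurableSet_Ioc hbound
    _ = y ^ y * exp (-y) * (y ^ (s - y) / (s - y)) := by
        rw [integral_const_mul, integral_rpow_sub_one_Ioc hsy hy.le]
    _ = y ^ s * exp (-y) / (s - y) := by
        rw [mul_div_assoc', mul_right_comm, ← rpow_add hy, add_sub_cancel]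
end

section
/- Let r > 1/2 and let z_n > 0 with y_n = 1/z_n satisfying y_n ≤ n − n^r eventually. Then χ_{z_n}^{(n)} ∼ y_n^{1−n} e^{y_n} Γ(n) as n → ∞. -/
open Finset Filter

/-! With `z = 1/y`, reversing the order of summation gives
`χ / (y^(1-n) e^y (n-1)!) = e^(-y) ∑_{k<n} y^k / k!`, a truncated exponential series, so the
ratio is at most `1`. The missing tail is at most `y^n/n! · n/(n-y)` by comparison with a geometric
series of ratio `y/n`; together with `n^n/n! ≤ e^n` and `log (1 - δ) ≤ -δ - δ²/2` this is at most
`n/(n-y) · e^(-(n-y)²/(2n)) · e^y`. If `n - y ≥ n^r` with `r > 1/2`, the factor in front of `e^y`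
is at most `n^(1-r) e^(-n^(2r-1)/2) → 0`. -/

open Real Nat

namespace Real

theorem hasSum_pow_div_factorial (x : ℝ) : HasSum (fun k => x ^ k / k !) (exp x) := by
  rw [exp_eq_exp_ℝ]
  exact NormedSpace.expSeries_div_hasSum_exp x

theorem exp_sub_sum_range_le {x : ℝ} (hx : 0 ≤ x) {n : ℕ} (hxn : x < n) :
    exp x - ∑ k ∈ range n, x ^ k / k ! ≤ x ^ n / n ! * (n / (n - x)) := by
  have hn : (0 : ℝ) < n := hx.trans_lt hxn
  have hq : x / n < 1 := (div_lt_one hn).mpr hxn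
  have htail := (hasSum_nat_add_iff' n).mpr (hasSum_pow_div_factorial x)
  have hgeom := (hasSum_geometric_of_lt_one (by positivity) hq).mul_left (x ^ n / n !)
  have hlim : (1 - x / n)⁻¹ = n / (n - x) := by field_simp
  rw [← hlim]
  refine hasSum_le (fun k => ?_) htail hgeom
  have hfac : (n ! * n ^ k : ℝ) ≤ (k + n)! := by
    rw [add_comm]
    exact_mod_cast (Nat.mul_le_mul_left _ (Nat.pow_le_pow_left n.le_succ k)).trans
      (Nat.factorial_mul_pow_le_factorial)
  calc x ^ (k + n) / (k + n)! ≤ x ^ (k + n) / (n ! * n ^ k) := by gcongr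
    _ = x ^ n / n ! * (x / n) ^ k := by
      rw [pow_add, div_pow]
      field_simp

theorem one_sub_mul_exp_le_exp_neg_sq {δ : ℝ} (hδ : 0 ≤ δ) :
    (1 - δ) * exp δ ≤ exp (-(δ ^ 2 / 2)) := by
  rcases lt_or_ge δ 1 with hδ1 | hδ1
  · have hlog := hasSum_pow_div_log_of_abs_lt_one (x := δ) (by rw [abs_of_nonneg hδ]; exact hδ1)
    have hle : δ + δ ^ 2 / 2 ≤ -log (1 - δ) := by
      have := sum_le_hasSum (range 2) (fun i _ => by positivity) hlog
      norm_num [sum_range_succ] at this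
      exact this
    calc (1 - δ) * exp δ = exp (log (1 - δ) + δ) := by
          rw [exp_add, exp_log (by linarith)]
      _ ≤ exp (-(δ ^ 2 / 2)) := exp_le_exp.mpr (by linarith)
  · exact (mul_nonpos_of_nonpos_of_nonneg (by linarith) (exp_pos δ).le).trans (exp_pos _).le

theorem exp_sub_sum_range_le_mul_exp {x : ℝ} (hx : 0 ≤ x) {n : ℕ} (hxn : x < n) :
    exp x - ∑ k ∈ range n, x ^ k / k ! ≤
      n / (n - x) * exp (-((n - x) ^ 2 / (2 * n))) * exp x := by
  have hn : (0 : ℝ) < n := hx.trans_lt hxn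
  set δ := (n - x) / n with hδ_def
  have hδ : 0 ≤ δ := div_nonneg (by linarith) hn.le
  have hxδ : x / n = 1 - δ := by rw [hδ_def]; field_simp; ring
  have hnδ : n * δ = n - x := by rw [hδ_def]; field_simp
  have hpow : x ^ n / n ! ≤ ((1 - δ) * exp δ) ^ n * exp x := by
    calc x ^ n / n ! = (x / n) ^ n * (n ^ n / n !) := by rw [div_pow]; field_simp
      _ ≤ (x / n) ^ n * exp n := by gcongr; exact pow_div_factorial_le_exp _ hn.le n
      _ = ((1 - δ) * exp δ) ^ n * exp x := by
        rw [mul_pow, ← exp_nat_mul, mul_assoc, ← exp_add, hxδ, hnδ, sub_add_cancel]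
  have hsq : ((1 - δ) * exp δ) ^ n ≤ exp (-((n - x) ^ 2 / (2 * n))) := by
    calc ((1 - δ) * exp δ) ^ n ≤ exp (-(δ ^ 2 / 2)) ^ n := by
          gcongr
          · exact mul_nonneg (by rw [← hxδ]; positivity) (exp_pos δ).le
          · exact one_sub_mul_exp_le_exp_neg_sq hδ
      _ = exp (-((n - x) ^ 2 / (2 * n))) := by
        rw [← exp_nat_mul, ← hnδ]
        congr 1
        field_simp
  calc exp x - ∑ k ∈ range n, x ^ k / k ! ≤ x ^ n / n ! * (n / (n - x)) :=
        exp_sub_sum_range_le hx hxn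
    _ ≤ exp (-((n - x) ^ 2 / (2 * n))) * exp x * (n / (n - x)) := by
        gcongr
        exact hpow.trans (by gcongr)
    _ = n / (n - x) * exp (-((n - x) ^ 2 / (2 * n))) * exp x := by ring

theorem exp_sub_sum_range_le_of_le_sub_rpow {x r : ℝ} (hx : 0 ≤ x) {n : ℕ} (hn : 0 < n)
    (hxn : x ≤ n - (n : ℝ) ^ r) :
    exp x - ∑ k ∈ range n, x ^ k / k ! ≤
      (n : ℝ) ^ (1 - r) * exp (-((n : ℝ) ^ (2 * r - 1) / 2)) * exp x := by
  have hn : (0 : ℝ) < n := by exact_mod_cast hn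
  have hnr : 0 < (n : ℝ) ^ r := rpow_pos_of_pos hn r
  have hgap : (n : ℝ) ^ r ≤ n - x := by linarith
  refine (exp_sub_sum_range_le_mul_exp hx (by linarith)).trans ?_
  have hfrac : n / (n - x) ≤ (n : ℝ) ^ (1 - r) := by
    rw [rpow_sub hn, rpow_one]
    gcongr
  have hexponent : (n : ℝ) ^ (2 * r - 1) / 2 ≤ (n - x) ^ 2 / (2 * n) := by
    rw [rpow_sub hn, rpow_one, mul_comm 2 r, rpow_mul hn.le, rpow_two, div_div, mul_comm _ 2]
    gcongr
  gcongr

end Real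

theorem tendsto_natCast_rpow_mul_exp_neg_rpow_nhds_zero {r : ℝ} (hr : 1 / 2 < r) :
    Tendsto (fun n : ℕ => (n : ℝ) ^ (1 - r) * exp (-((n : ℝ) ^ (2 * r - 1) / 2)))
      atTop (nhds 0) := by
  have hs : 0 < 2 * r - 1 := by linarith
  -- Substitute `u = n ^ (2r - 1)`, so that `n ^ (1 - r) = u ^ ((1 - r) / (2r - 1))`.
  have hu : Tendsto (fun n : ℕ => (n : ℝ) ^ (2 * r - 1)) atTop atTop :=
    (tendsto_rpow_atTop hs).comp tendsto_natCast_atTop_atTop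
  refine ((tendsto_rpow_mul_exp_neg_mul_atTop_nhds_zero ((1 - r) / (2 * r - 1)) (1 / 2)
    one_half_pos).comp hu).congr fun n => ?_
  simp only [Function.comp_apply]
  rw [← rpow_mul (Nat.cast_nonneg n), mul_div_cancel₀ _ hs.ne', neg_mul, one_div, inv_mul_eq_div]

theorem chi_one_div {y : ℝ} (hy : y ≠ 0) (n : ℕ) :
    chi n (1 / y) = y ^ (1 - (n : ℤ)) * (n - 1)! * ∑ k ∈ range n, y ^ k / k ! := by
  rw [chi, mul_sum, ← sum_range_reflect]
  refine sum_congr rfl fun N hN => ?_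
  have hNn : N < n := mem_range.mp hN
  have hzpow : y ^ (1 - (n : ℤ)) * y ^ N = (1 / y) ^ (n - 1 - N) := by
    rw [← zpow_natCast, ← zpow_add₀ hy, one_div, inv_pow, ← zpow_natCast, ← zpow_neg]
    congr 1
    omega
  rw [sawCount, Nat.sub_sub_self (by omega), ← hzpow]
  ring

theorem chi_one_div_div {y : ℝ} (hy : 0 < y) (n : ℕ) :
    chi n (1 / y) / (y ^ (1 - (n : ℤ)) * exp y * (n - 1)!) =
      (∑ k ∈ range n, y ^ k / k !) / exp y := by
  rw [chi_one_div hy.ne']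
  have hzpow : y ^ (1 - (n : ℤ)) ≠ 0 := zpow_ne_zero _ hy.ne'
  field_simp

theorem chi_supercritical (r : ℝ) (hr : 1 / 2 < r) (y : ℕ → ℝ)
    (hypos : ∀ n, 0 < y n)
    (hy : ∀ᶠ n : ℕ in atTop, y n ≤ (n : ℝ) - (n : ℝ) ^ r) :
    Tendsto
      (fun n : ℕ =>
        chi n (1 / y n) /
          (y n ^ (1 - (n : ℤ)) * Real.exp (y n) * (Nat.factorial (n - 1) : ℝ)))
      atTop (nhds 1) := by
  simp_rw [chi_one_div_div (hypos _)]
  have hlower := (tendsto_natCast_rpow_mul_exp_neg_rpow_nhds_zero hr).const_sub 1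
  rw [sub_zero] at hlower
  refine tendsto_of_tendsto_of_tendsto_of_le_of_le' hlower tendsto_const_nhds ?_ ?_
  · filter_upwards [hy, eventually_gt_atTop 0] with n hyn hn
    have := exp_sub_sum_range_le_of_le_sub_rpow (hypos n).le hn hyn
    rw [le_div_iff₀ (exp_pos _)]
    linarith
  · exact Eventually.of_forall fun n =>
      (div_le_one (exp_pos _)).mpr (sum_le_exp_of_nonneg (hypos n).le n)
end

section
/- For fixed s ∈ (0,1) and z = 1/(sn), the susceptibility satisfies χ_z^{(n)} ∼ s √(2πn) e^{(|log s| + s − 1)n} as n → ∞, and the exponent |log s| + s − 1 is strictly positive for s ∈ (0,1). -/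
open Finset Filter Real

/-! Reversing the order of summation gives `χ(1/x) = (n-1)!/x^(n-1) · ∑_{k<n} x^k/k!`.
At `x = sn` the truncated exponential series misses only a fraction `O((s e^(1-s))^n)` of
`e^(sn)`, which is negligible because `log s < s - 1`; Stirling's formula for `(n-1)! = n!/n`
then gives the asymptotics. -/

open Nat Asymptotics Topology

theorem neg_log_add_sub_one_pos {s : ℝ} (hs0 : 0 < s) (hs1 : s ≠ 1) : 0 < -log s + s - 1 := by
  linarith [log_lt_sub_one_of_pos hs0 hs1]

theorem chi_inv_eq {x : ℝ} (hx : x ≠ 0) (n : ℕ) :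
    chi n x⁻¹ = (n - 1)! / x ^ (n - 1) * ∑ k ∈ range n, x ^ k / k ! := by
  rw [chi, ← sum_range_reflect, mul_sum]
  refine sum_congr rfl fun k hk => ?_
  have hkn : k ≤ n - 1 := Nat.le_sub_one_of_lt (mem_range.1 hk)
  rw [sawCount, Nat.sub_sub_self hkn, inv_pow, ← Nat.sub_add_cancel hkn, pow_add,
    Nat.add_sub_cancel]
  field_simp

theorem exp_sub_sum_range_le {x : ℝ} {n : ℕ} (hx : 0 ≤ x) (hxn : x < n + 1) :
    exp x - ∑ k ∈ range n, x ^ k / k ! ≤ x ^ n / n ! * (1 - x / (n + 1))⁻¹ := by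
  have htail : HasSum (fun j => x ^ (j + n) / (j + n)!) (exp x - ∑ k ∈ range n, x ^ k / k !) :=
    (hasSum_nat_add_iff' (f := fun k => x ^ k / k !) n).2
      (exp_eq_exp_ℝ ▸ NormedSpace.expSeries_div_hasSum_exp x)
  have hgeom := (hasSum_geometric_of_lt_one (by positivity)
    ((div_lt_one (by positivity)).2 hxn)).mul_left (x ^ n / n !)
  refine hasSum_le (fun j => ?_) htail hgeom
  have hfac : (n ! : ℝ) * (n + 1) ^ j ≤ (j + n)! := by
    rw [add_comm j]; exact_mod_cast Nat.factorial_mul_pow_le_factorial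
  calc x ^ (j + n) / (j + n)! ≤ x ^ (j + n) / (n ! * (n + 1) ^ j) := by gcongr
    _ = x ^ n / n ! * (x / (n + 1)) ^ j := by rw [pow_add, div_pow]; field_simp

theorem mul_natCast_pow_div_factorial_le_exp {s : ℝ} (hs : 0 < s) (n : ℕ) :
    (s * n) ^ n / n ! ≤ exp ((log s + 1) * n) := by
  calc (s * n) ^ n / n ! = s ^ n * ((n : ℝ) ^ n / n !) := by rw [mul_pow, mul_div_assoc]
    _ ≤ s ^ n * exp n := by gcongr; exact pow_div_factorial_le_exp _ n.cast_nonneg n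
    _ = exp ((log s + 1) * n) := by
      rw [add_mul, exp_add, one_mul, mul_comm (log s), exp_nat_mul, exp_log hs]

theorem one_sub_exp_le_sum_range_div_exp {s : ℝ} (hs0 : 0 < s) (hs1 : s < 1) (n : ℕ) :
    1 - (1 - s)⁻¹ * exp (-((-log s + s - 1) * n)) ≤
      (∑ k ∈ range n, (s * n) ^ k / k !) / exp (s * n) := by
  have hxn : s * n < n + 1 := by nlinarith [n.cast_nonneg (α := ℝ)]
  have hq : s * n / (n + 1) ≤ s := div_le_of_le_mul₀ (by positivity) hs0.le (by nlinarith)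
  have hratio : (1 - s * n / (n + 1))⁻¹ ≤ (1 - s)⁻¹ := inv_anti₀ (by linarith) (by linarith)
  have hexp : exp ((log s + 1) * n) = exp (-((-log s + s - 1) * n)) * exp (s * n) := by
    rw [← exp_add]; ring_nf
  rw [le_div_iff₀ (exp_pos _)]
  calc (1 - (1 - s)⁻¹ * exp (-((-log s + s - 1) * n))) * exp (s * n)
      = exp (s * n) - exp ((log s + 1) * n) * (1 - s)⁻¹ := by rw [hexp]; ring
    _ ≤ exp (s * n) - (s * n) ^ n / n ! * (1 - s * n / (n + 1))⁻¹ := by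
      gcongr
      · exact inv_nonneg.2 (by linarith)
      · exact mul_natCast_pow_div_factorial_le_exp hs0 n
    _ ≤ ∑ k ∈ range n, (s * n) ^ k / k ! := by
      linarith [exp_sub_sum_range_le (x := s * n) (by positivity) hxn]

theorem tendsto_sum_range_div_exp {s : ℝ} (hs0 : 0 < s) (hs1 : s < 1) :
    Tendsto (fun n : ℕ => (∑ k ∈ range n, (s * n) ^ k / k !) / exp (s * n)) atTop (𝓝 1) := by
  have hlower : Tendsto (fun n : ℕ => 1 - (1 - s)⁻¹ * exp (-((-log s + s - 1) * n)))
      atTop (𝓝 1) := by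
    have hdecay := tendsto_exp_neg_atTop_nhds_zero.comp
      (tendsto_natCast_atTop_atTop.const_mul_atTop (neg_log_add_sub_one_pos hs0 hs1.ne))
    simpa using (hdecay.const_mul (1 - s)⁻¹).const_sub 1
  exact tendsto_of_tendsto_of_tendsto_of_le_of_le hlower tendsto_const_nhds
    (one_sub_exp_le_sum_range_div_exp hs0 hs1)
    fun n => (div_le_one (exp_pos _)).2 (sum_le_exp_of_nonneg (by positivity) n)

theorem stirling_mul_exp_eq {s : ℝ} (hs : 0 < s) {n : ℕ} (hn : n ≠ 0) :
    √(2 * n * π) * (n / exp 1) ^ n * (s / (s * n) ^ n) * exp (s * n) =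
      s * √(2 * π * n) * exp ((-log s + s - 1) * n) := by
  have hexp : exp ((-log s + s - 1) * n) = exp (s * n) / (exp (log s) ^ n * exp 1 ^ n) := by
    rw [← exp_nat_mul, ← exp_nat_mul, ← exp_add, ← exp_sub]; ring_nf
  rw [hexp, exp_log hs, mul_right_comm 2 (n : ℝ), div_pow]
  field_simp
  ring

theorem chi_supercritical_isEquivalent {s : ℝ} (hs0 : 0 < s) (hs1 : s < 1) :
    (fun n : ℕ => chi n (1 / (s * n))) ~[atTop]
      fun n => s * √(2 * π * n) * exp ((-log s + s - 1) * n) := by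
  have hsum := isEquivalent_of_tendsto_one (tendsto_sum_range_div_exp hs0 hs1)
  -- `χ(1/(sn)) = n! · s/(sn)^n · ∑_{k<n} (sn)^k/k!`, and each factor has a known equivalent
  have hprod := (Stirling.factorial_isEquivalent_stirling.mul
    (IsEquivalent.refl (u := fun n : ℕ => s / (s * n) ^ n))).mul hsum
  refine (hprod.congr_left ?_).congr_right ?_
  · filter_upwards [eventually_ne_atTop 0] with n hn
    have hsn : s * n ≠ 0 := by positivity
    simp only [Pi.mul_apply]
    rw [one_div, chi_inv_eq hsn, ← Nat.mul_factorial_pred hn, ← Nat.succ_pred_eq_of_ne_zero hn,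
      pow_succ]
    push_cast
    field_simp
  · filter_upwards [eventually_ne_atTop 0] with n hn
    exact stirling_mul_exp_eq hs0 hn

theorem chi_supercritical_fixed_s (s : ℝ) (hs0 : 0 < s) (hs1 : s < 1) :
    Tendsto
      (fun n : ℕ =>
        chi n (1 / (s * n)) /
          (s * Real.sqrt (2 * π * n) * Real.exp ((|Real.log s| + s - 1) * n)))
      atTop (nhds 1) ∧
    0 < |Real.log s| + s - 1 := by
  rw [abs_of_neg (log_neg hs0 hs1)]
  have hpos : ∀ᶠ n : ℕ in atTop, s * √(2 * π * n) * exp ((-log s + s - 1) * n) ≠ 0 := by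
    filter_upwards [eventually_ne_atTop 0] with n hn
    positivity
  exact ⟨(isEquivalent_iff_tendsto_one hpos).1 (chi_supercritical_isEquivalent hs0 hs1),
    neg_log_add_sub_one_pos hs0 hs1.ne⟩
end

section
/- For fixed s > 1 and z = 1/(sn), the length L of a random self-avoiding walk on K_n converges in distribution as n → ∞ to G − 1, where G is geometric with success parameter 1 − 1/s; equivalently, for each fixed N ≥ 0, P(L = N) → (1 − 1/s) s^{-N}. -/
open Finset Filter

/-- `P(L = N) = c_N^{(n)} z^N / χ_z^{(n)}`, the law of the random length. -/
noncomputable def probL (n : ℕ) (z : ℝ) (N : ℕ) : ℝ :=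
  sawCount n N * z ^ N / chi n z

lemma sawCount_eq_descFactorial {n k : ℕ} (h : k ≤ n - 1) :
    sawCount n k = ((n - 1).descFactorial k : ℝ) := by
  unfold sawCount
  rw [← Nat.factorial_mul_descFactorial h]
  push_cast
  exact mul_div_cancel_left₀ _ (by exact_mod_cast (Nat.factorial_pos _).ne')

lemma sawCount_nonneg (n k : ℕ) : 0 ≤ sawCount n k :=
  div_nonneg (Nat.cast_nonneg _) (Nat.cast_nonneg _)

lemma term_le {s : ℝ} (hs : 1 < s) {n k : ℕ} (hn : 1 ≤ n) (hk : k ≤ n - 1) :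
    sawCount n k * (1 / (s * n)) ^ k ≤ (1 / s) ^ k := by
  have hs0 : (0 : ℝ) < s := lt_trans one_pos hs
  have hn0 : (0 : ℝ) < (n : ℝ) := by exact_mod_cast hn
  have h1 : sawCount n k ≤ (n : ℝ) ^ k := by
    rw [sawCount_eq_descFactorial hk]
    calc ((n - 1).descFactorial k : ℝ) ≤ ((n - 1 : ℕ) : ℝ) ^ k := by
          exact_mod_cast Nat.descFactorial_le_pow _ _
      _ ≤ (n : ℝ) ^ k := by
          apply pow_le_pow_left₀ (Nat.cast_nonneg _)
          exact_mod_cast Nat.sub_le n 1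
  have h2 : (0 : ℝ) ≤ (1 / (s * n)) ^ k :=
    pow_nonneg (by positivity) k
  calc sawCount n k * (1 / (s * n)) ^ k ≤ (n : ℝ) ^ k * (1 / (s * n)) ^ k :=
        mul_le_mul_of_nonneg_right h1 h2
    _ = ((n : ℝ) * (1 / (s * n))) ^ k := (mul_pow _ _ _).symm
    _ = (1 / s) ^ k := by
        congr 1
        field_simp

lemma tendsto_term (s : ℝ) (hs : 1 < s) (k : ℕ) :
    Tendsto (fun n : ℕ => sawCount n k * (1 / (s * n)) ^ k) atTop (nhds ((1 / s) ^ k)) := by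
  have hs0 : s ≠ 0 := by positivity
  have hfac : ∀ j ∈ Finset.range k,
      Tendsto (fun n : ℕ => ((n - 1 - j : ℕ) : ℝ) / (s * n)) atTop (nhds (1 / s)) := by
    intro j _
    have h0 : Tendsto (fun n : ℕ => 1 / s - ((1 + j : ℝ) / s) * (1 / (n : ℝ))) atTop
        (nhds (1 / s - ((1 + j : ℝ) / s) * 0)) :=
      tendsto_const_nhds.sub (tendsto_one_div_atTop_nhds_zero_nat.const_mul _)
    rw [mul_zero, sub_zero] at h0
    apply h0.congr'
    filter_upwards [eventually_ge_atTop (j + 1)] with n hn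
    have hn0 : (0 : ℝ) < (n : ℝ) := by
      have : 1 ≤ n := le_trans (Nat.le_add_left 1 j) hn
      exact_mod_cast this
    have hcast : ((n - 1 - j : ℕ) : ℝ) = (n : ℝ) - (1 + j) := by
      have : n - 1 - j = n - (1 + j) := by omega
      rw [this]
      push_cast [Nat.cast_sub (by omega : 1 + j ≤ n)]
      ring
    rw [hcast]
    field_simp
  have hprod := tendsto_finset_prod (Finset.range k)
    (f := fun j (n : ℕ) => ((n - 1 - j : ℕ) : ℝ) / (s * n)) hfac
  rw [Finset.prod_const, Finset.card_range] at hprod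
  apply hprod.congr'
  filter_upwards [eventually_ge_atTop (k + 1)] with n hn
  have hk : k ≤ n - 1 := by omega
  have hn0 : (0 : ℝ) < (n : ℝ) := by
    have : 1 ≤ n := by omega
    exact_mod_cast this
  rw [sawCount_eq_descFactorial hk, Nat.descFactorial_eq_prod_range]
  push_cast
  rw [Finset.prod_div_distrib, Finset.prod_const, Finset.card_range, div_pow, one_pow,
    mul_one_div]

lemma tendsto_chi (s : ℝ) (hs : 1 < s) :
    Tendsto (fun n : ℕ => chi n (1 / (s * n))) atTop (nhds (1 - 1 / s)⁻¹) := by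
  have hs0 : (0 : ℝ) < s := lt_trans one_pos hs
  have hlt : (1 : ℝ) / s < 1 := by
    rw [div_lt_one hs0]; exact hs
  have hge : (0 : ℝ) ≤ 1 / s := by positivity
  set f : ℕ → ℕ → ℝ := fun n k => if k < n then sawCount n k * (1 / (s * n)) ^ k else 0 with hf
  have hchi : ∀ n : ℕ, chi n (1 / (s * n)) = ∑' k, f n k := by
    intro n
    rw [tsum_eq_sum (s := Finset.range n)
      (fun k hk => if_neg (by simpa using hk))]
    exact (Finset.sum_congr rfl fun k hk => (if_pos (Finset.mem_range.mp hk)).symm)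
  have key : Tendsto (fun n => ∑' k, f n k) atTop (nhds (∑' k, (1 / s) ^ k)) := by
    apply tendsto_tsum_of_dominated_convergence (bound := fun k => (1 / s) ^ k)
      (summable_geometric_of_lt_one hge hlt)
    · intro k
      apply (tendsto_term s hs k).congr'
      filter_upwards [eventually_gt_atTop k] with n hn
      exact (if_pos hn).symm
    · filter_upwards [eventually_ge_atTop 1] with n hn k
      by_cases h : k < n
      · rw [hf]
        simp only [if_pos h]
        rw [Real.norm_eq_abs, abs_of_nonneg (mul_nonneg (sawCount_nonneg n k)
          (pow_nonneg (by positivity) k))]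
        exact term_le hs hn (by omega)
      · rw [hf]
        simp only [if_neg h, norm_zero]
        positivity
  rw [tsum_geometric_of_lt_one hge hlt] at key
  exact key.congr fun n => (hchi n).symm

/-- For `z = 1/(sn)` with `s > 1` fixed, `L` converges in distribution to `G − 1`
with `G` geometric of parameter `1 − 1/s`: pointwise, `P(L = N) → (1 − 1/s) s^{-N}`. -/
theorem length_subcritical_geometric (s : ℝ) (hs : 1 < s) (N : ℕ) :
    Tendsto (fun n : ℕ => probL n (1 / (s * n)) N) atTop
      (nhds ((1 - 1 / s) * s ^ (-(N : ℤ)))) := by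
  have hs0 : (0 : ℝ) < s := lt_trans one_pos hs
  have hne : (1 - 1 / s)⁻¹ ≠ 0 := by
    have : (0 : ℝ) < 1 - 1 / s := by
      rw [sub_pos, div_lt_one hs0]; exact hs
    positivity
  have h := (tendsto_term s hs N).div (tendsto_chi s hs) hne
  have heq : (1 / s) ^ N / (1 - 1 / s)⁻¹ = (1 - 1 / s) * s ^ (-(N : ℤ)) := by
    rw [div_eq_mul_inv, inv_inv, mul_comm]
    congr 1
    rw [zpow_neg, zpow_natCast, one_div, inv_pow]
  rw [heq] at h
  exact h
end

section
/- The function α_τ = −τ + √(2/π) e^{−τ²/2} / erfc(τ/√2) is strictly positive and strictly decreasing in τ ∈ ℝ, with α_τ ∼ −τ as τ → −∞ and α_τ ∼ 1/τ as τ → +∞. -/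
open Filter Real

/-- The complementary error function `erfc(x) = (2/√π) ∫_x^∞ e^{-t²} dt`. -/
noncomputable def erfc (x : ℝ) : ℝ :=
  2 / Real.sqrt π * ∫ t in Set.Ioi x, Real.exp (-t ^ 2)

/-- `α_τ = −τ + √(2/π) e^{−τ²/2} / erfc(τ/√2)`. -/
noncomputable def alphaConst (τ : ℝ) : ℝ :=
  -τ + Real.sqrt (2 / π) * Real.exp (-τ ^ 2 / 2) / erfc (τ / Real.sqrt 2)

/-!
Write `φ(x) = exp(-x²/2)` and `Q(x) = ∫ₓ^∞ φ`; the substitution `t = s/√2` in `erfc` gives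
`α(τ) = φ(τ)/Q(τ) - τ`. Positivity is Mills' inequality `τ Q < φ`, obtained by integrating
`(t - τ) φ(t) > 0` over `(τ, ∞)`. The other Gaussian tail inequalities all come from one device:
a function that tends to `0` at `+∞` and has negative derivative is positive. Applied to
`(τ² + 1) Q - τ φ` (derivative `2(τ Q - φ)`) it gives `τ α < 1`; applied to `τ φ Q + Q² - φ²`
(derivative `-φ((τ² + 1) Q - τ φ)`) it gives `φ² - τ φ Q - Q² < 0`, which is `Q² α' < 0`;
applied to `φ (τ⁴ - τ² + 3)/τ⁵ - Q` (derivative `-15 φ/τ⁶`) it gives `τ α > 1 - 3/τ²`.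
As `τ → -∞`, `φ → 0` while `Q ≥ Q(0)`, so `α = -τ + o(1)`.
-/

open MeasureTheory Set Topology

theorem pos_of_hasDerivAt_neg_of_tendsto_zero {f f' : ℝ → ℝ} {a : ℝ}
    (hf : ∀ x ∈ Ioi a, HasDerivAt f (f' x) x) (hf' : ∀ x ∈ Ioi a, f' x < 0)
    (hlim : Tendsto f atTop (𝓝 0)) {x : ℝ} (hx : a < x) : 0 < f x := by
  have hanti : StrictAntiOn f (Ioi a) :=
    strictAntiOn_of_hasDerivWithinAt_neg (convex_Ioi a)
      (fun y hy => (hf y hy).continuousAt.continuousWithinAt)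
      (by simpa only [interior_Ioi] using fun y hy => (hf y hy).hasDerivWithinAt)
      (by simpa only [interior_Ioi] using hf')
  have hx1 : a < x + 1 := by linarith
  have hnonneg : 0 ≤ f (x + 1) := le_of_tendsto hlim <| eventually_atTop.2
    ⟨x + 1, fun y hy => hanti.antitoneOn hx1 (hx1.trans_le hy) hy⟩
  exact hnonneg.trans_lt (hanti hx hx1 (lt_add_one x))

theorem hasDerivAt_integral_Ioi {f : ℝ → ℝ} (hint : Integrable f) (hcont : Continuous f)
    (x : ℝ) : HasDerivAt (fun a => ∫ t in Ioi a, f t) (-f x) x := by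
  have h : (fun a => ∫ t in Ioi a, f t) = fun a => (∫ t in Ioi 0, f t) - ∫ t in 0..a, f t := by
    funext a
    exact eq_sub_of_add_eq'
      (intervalIntegral.integral_interval_add_Ioi hint.integrableOn hint.integrableOn)
  rw [h]
  exact (intervalIntegral.integral_hasDerivAt_right hint.intervalIntegrable
    (hcont.stronglyMeasurableAtFilter _ _) hcont.continuousAt).const_sub _

theorem setIntegral_Ioi_pos {f : ℝ → ℝ} {a : ℝ} (hf : IntegrableOn f (Ioi a))
    (hpos : ∀ t ∈ Ioi a, 0 < f t) : 0 < ∫ t in Ioi a, f t := by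
  rw [setIntegral_pos_iff_support_of_nonneg_ae
    ((ae_restrict_mem measurableSet_Ioi).mono fun t ht => (hpos t ht).le) hf,
    inter_eq_self_of_subset_right (s := Function.support f) fun t ht => (hpos t ht).ne',
    volume_Ioi]
  exact ENNReal.zero_lt_top

noncomputable def gaussian (x : ℝ) : ℝ := exp (-x ^ 2 / 2)

noncomputable def gaussianTail (x : ℝ) : ℝ := ∫ t in Ioi x, gaussian t

theorem gaussian_eq : gaussian = fun x => exp (-(1 / 2) * x ^ 2) := by
  funext x; rw [gaussian]; ring_nf

theorem gaussian_pos (x : ℝ) : 0 < gaussian x := exp_pos _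

theorem continuous_gaussian : Continuous gaussian := by
  unfold gaussian; fun_prop

theorem integrable_gaussian : Integrable gaussian :=
  gaussian_eq ▸ integrable_exp_neg_mul_sq (by norm_num)

theorem integrable_mul_gaussian : Integrable fun x => x * gaussian x := by
  simpa only [gaussian_eq] using integrable_mul_exp_neg_mul_sq (b := 1 / 2) (by norm_num)

theorem hasDerivAt_gaussian (x : ℝ) : HasDerivAt gaussian (-x * gaussian x) x := by
  have h : HasDerivAt (fun t : ℝ => -t ^ 2 / 2) (-x) x := by
    have := (hasDerivAt_pow 2 x).neg.div_const 2
    simpa using this.congr_deriv (by ring)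
  exact h.exp.congr_deriv (by rw [gaussian]; ring)

theorem tendsto_abs_rpow_mul_gaussian_cocompact (s : ℝ) :
    Tendsto (fun x => |x| ^ s * gaussian x) (cocompact ℝ) (𝓝 0) := by
  simpa only [gaussian_eq] using tendsto_rpow_abs_mul_exp_neg_mul_sq_cocompact one_half_pos s

theorem tendsto_gaussian_cocompact : Tendsto gaussian (cocompact ℝ) (𝓝 0) := by
  simpa using tendsto_abs_rpow_mul_gaussian_cocompact 0

theorem tendsto_gaussian_atTop : Tendsto gaussian atTop (𝓝 0) :=
  tendsto_gaussian_cocompact.mono_left atTop_le_cocompact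

theorem tendsto_mul_gaussian_atTop : Tendsto (fun x => x * gaussian x) atTop (𝓝 0) :=
  ((tendsto_abs_rpow_mul_gaussian_cocompact 1).mono_left atTop_le_cocompact).congr' <|
    (eventually_ge_atTop 0).mono fun x hx => by rw [rpow_one, abs_of_nonneg hx]

theorem gaussianTail_pos (x : ℝ) : 0 < gaussianTail x :=
  setIntegral_Ioi_pos integrable_gaussian.integrableOn fun t _ => gaussian_pos t

theorem gaussianTail_antitone : Antitone gaussianTail := fun _ _ hab =>
  setIntegral_mono_set integrable_gaussian.integrableOn
    (Eventually.of_forall fun t => (gaussian_pos t).le) (Ioi_subset_Ioi hab).eventuallyLE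

theorem hasDerivAt_gaussianTail (x : ℝ) : HasDerivAt gaussianTail (-gaussian x) x :=
  hasDerivAt_integral_Ioi integrable_gaussian continuous_gaussian x

theorem integral_Ioi_mul_gaussian (a : ℝ) : ∫ t in Ioi a, t * gaussian t = gaussian a := by
  have h := integral_Ioi_of_hasDerivAt_of_tendsto' (a := a) (f := fun t => -gaussian t)
    (fun x _ => by simpa using (hasDerivAt_gaussian x).fun_neg)
    integrable_mul_gaussian.integrableOn
    (by simpa using tendsto_gaussian_atTop.neg)
  simpa using h

theorem mul_gaussianTail_lt_gaussian (x : ℝ) : x * gaussianTail x < gaussian x := by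
  have hint : Integrable fun t => (t - x) * gaussian t := by
    refine (integrable_mul_gaussian.sub (integrable_gaussian.const_mul x)).congr ?_
    exact Eventually.of_forall fun t => by simp only [Pi.sub_apply]; ring
  have hdiff : gaussian x - x * gaussianTail x = ∫ t in Ioi x, (t - x) * gaussian t := by
    simp_rw [sub_mul]
    rw [integral_sub integrable_mul_gaussian.integrableOn
      (integrable_gaussian.const_mul x).integrableOn, integral_Ioi_mul_gaussian,
      integral_const_mul, gaussianTail]
  have hpos : 0 < ∫ t in Ioi x, (t - x) * gaussian t :=
    setIntegral_Ioi_pos hint.integrableOn fun t ht => mul_pos (sub_pos.2 ht) (gaussian_pos t)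
  linarith

theorem tendsto_gaussianTail_atTop : Tendsto gaussianTail atTop (𝓝 0) :=
  squeeze_zero' (Eventually.of_forall fun x => (gaussianTail_pos x).le)
    ((eventually_ge_atTop 1).mono fun x hx => by
      nlinarith [mul_gaussianTail_lt_gaussian x, gaussianTail_pos x])
    tendsto_gaussian_atTop

theorem tendsto_sq_mul_gaussianTail_atTop :
    Tendsto (fun x => x ^ 2 * gaussianTail x) atTop (𝓝 0) :=
  squeeze_zero' (Eventually.of_forall fun x => mul_nonneg (sq_nonneg x) (gaussianTail_pos x).le)
    ((eventually_ge_atTop 0).mono fun x hx => by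
      rw [sq, mul_assoc]; exact mul_le_mul_of_nonneg_left (mul_gaussianTail_lt_gaussian x).le hx)
    tendsto_mul_gaussian_atTop

theorem mul_gaussian_lt_sq_add_one_mul_gaussianTail (x : ℝ) :
    x * gaussian x < (x ^ 2 + 1) * gaussianTail x := by
  have hderiv (y : ℝ) : HasDerivAt (fun y => (y ^ 2 + 1) * gaussianTail y - y * gaussian y)
      (2 * (y * gaussianTail y - gaussian y)) y := by
    refine ((((hasDerivAt_pow 2 y).add_const 1).fun_mul (hasDerivAt_gaussianTail y)).fun_sub
      ((hasDerivAt_id' y).fun_mul (hasDerivAt_gaussian y))).congr_deriv ?_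
    norm_num
    ring
  have hlim : Tendsto (fun y => (y ^ 2 + 1) * gaussianTail y - y * gaussian y) atTop (𝓝 0) := by
    simpa using ((tendsto_sq_mul_gaussianTail_atTop.add tendsto_gaussianTail_atTop).sub
      tendsto_mul_gaussian_atTop).congr fun y => by ring
  have := pos_of_hasDerivAt_neg_of_tendsto_zero (fun y _ => hderiv y)
    (fun y _ => by linarith [mul_gaussianTail_lt_gaussian y]) hlim (sub_one_lt x)
  linarith

theorem sq_gaussian_lt_mul_add_sq_gaussianTail (x : ℝ) :
    gaussian x ^ 2 < x * gaussian x * gaussianTail x + gaussianTail x ^ 2 := by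
  set G := fun y => y * gaussian y * gaussianTail y + gaussianTail y ^ 2 - gaussian y ^ 2
  have hderiv (y : ℝ) : HasDerivAt G
      (-(gaussian y * ((y ^ 2 + 1) * gaussianTail y - y * gaussian y))) y := by
    refine ((((hasDerivAt_id' y).fun_mul (hasDerivAt_gaussian y)).fun_mul
      (hasDerivAt_gaussianTail y)).fun_add ((hasDerivAt_gaussianTail y).fun_pow 2) |>.fun_sub
      ((hasDerivAt_gaussian y).fun_pow 2)).congr_deriv ?_
    norm_num
    ring
  have hlim : Tendsto G atTop (𝓝 0) := by
    simpa using ((tendsto_mul_gaussian_atTop.mul tendsto_gaussianTail_atTop).add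
      (tendsto_gaussianTail_atTop.pow 2)).sub (tendsto_gaussian_atTop.pow 2)
  have := pos_of_hasDerivAt_neg_of_tendsto_zero (fun y _ => hderiv y)
    (fun y _ => neg_lt_zero.2 (mul_pos (gaussian_pos y)
      (sub_pos.2 (mul_gaussian_lt_sq_add_one_mul_gaussianTail y)))) hlim (sub_one_lt x)
  simp only [G] at this
  linarith

theorem erfc_div_sqrt_two (x : ℝ) : erfc (x / √2) = √(2 / π) * gaussianTail x := by
  have hsubst := integral_comp_mul_left_Ioi (fun t => exp (-t ^ 2)) x (b := (√2)⁻¹) (by positivity)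
  have hcongr : ∫ t in Ioi x, exp (-((√2)⁻¹ * t) ^ 2) = gaussianTail x := by
    refine setIntegral_congr_fun measurableSet_Ioi fun t _ => ?_
    rw [gaussian, mul_pow, inv_pow, sq_sqrt zero_le_two]
    ring_nf
  rw [hcongr, inv_inv, smul_eq_mul, ← div_eq_inv_mul] at hsubst
  rw [erfc, sqrt_div zero_le_two, hsubst]
  linear_combination -(∫ t in Ioi (x / √2), exp (-t ^ 2)) / √π * mul_self_sqrt zero_le_two

theorem alphaConst_eq (τ : ℝ) : alphaConst τ = gaussian τ / gaussianTail τ - τ := by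
  have hc : √(2 / π) ≠ 0 := (sqrt_pos.2 (div_pos two_pos pi_pos)).ne'
  rw [alphaConst, erfc_div_sqrt_two, mul_div_mul_left _ _ hc, neg_add_eq_sub]
  rfl

theorem alphaConst_pos (τ : ℝ) : 0 < alphaConst τ := by
  rw [alphaConst_eq, sub_pos, lt_div_iff₀ (gaussianTail_pos τ)]
  exact mul_gaussianTail_lt_gaussian τ

theorem hasDerivAt_alphaConst (τ : ℝ) : HasDerivAt alphaConst
    ((gaussian τ ^ 2 - τ * gaussian τ * gaussianTail τ - gaussianTail τ ^ 2) /
      gaussianTail τ ^ 2) τ := by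
  have hQ := (gaussianTail_pos τ).ne'
  rw [funext alphaConst_eq]
  refine (((hasDerivAt_gaussian τ).fun_div (hasDerivAt_gaussianTail τ) hQ).fun_sub
    (hasDerivAt_id' τ)).congr_deriv ?_
  field_simp
  ring

theorem alphaConst_strictAnti : StrictAnti alphaConst :=
  strictAnti_of_hasDerivAt_neg hasDerivAt_alphaConst fun τ =>
    div_neg_of_neg_of_pos (by linarith [sq_gaussian_lt_mul_add_sq_gaussianTail τ])
      (pow_pos (gaussianTail_pos τ) 2)

theorem tendsto_alphaConst_div_neg_atBot :
    Tendsto (fun τ => alphaConst τ / (-τ)) atBot (𝓝 1) := by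
  have hgauss := (tendsto_gaussian_cocompact.mono_left atBot_le_cocompact).div_const
    (gaussianTail 0)
  rw [zero_div] at hgauss
  have hratio : Tendsto (fun τ => gaussian τ / gaussianTail τ) atBot (𝓝 0) :=
    squeeze_zero' (Eventually.of_forall fun τ => (div_pos (gaussian_pos τ) (gaussianTail_pos τ)).le)
      ((eventually_le_atBot 0).mono fun τ hτ => div_le_div_of_nonneg_left (gaussian_pos τ).le
        (gaussianTail_pos 0) (gaussianTail_antitone hτ))
      hgauss
  have hsmall := hratio.div_atTop tendsto_neg_atBot_atTop
  have hlim : Tendsto (fun τ => 1 + gaussian τ / gaussianTail τ / -τ) atBot (𝓝 1) := by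
    simpa using hsmall.const_add 1
  refine hlim.congr' ?_
  filter_upwards [eventually_lt_atBot 0] with τ hτ
  rw [alphaConst_eq, sub_div, div_neg_self hτ.ne, sub_neg_eq_add, add_comm]

theorem pow_four_sub_sq_add_three_pos (y : ℝ) : 0 < y ^ 4 - y ^ 2 + 3 := by
  nlinarith [sq_nonneg (y ^ 2 - 1 / 2)]

/- An odd truncation of the asymptotic series `Q/φ ~ 1/x - 1/x³ + 3/x⁵ - ⋯` bounds `Q/φ` from
above. One term only gives `τ α > 0`; three are needed for `τ α → 1`. -/
theorem gaussianTail_lt_gaussian_mul {x : ℝ} (hx : 0 < x) :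
    gaussianTail x < gaussian x * ((x ^ 4 - x ^ 2 + 3) / x ^ 5) := by
  set K := fun y => gaussian y * ((y ^ 4 - y ^ 2 + 3) / y ^ 5) - gaussianTail y
  have hderiv (y : ℝ) (hy : y ∈ Ioi 0) : HasDerivAt K (-15 * gaussian y / y ^ 6) y := by
    have hy0 : y ≠ 0 := (mem_Ioi.1 hy).ne'
    refine (((hasDerivAt_gaussian y).fun_mul ((((hasDerivAt_pow 4 y).fun_sub
      (hasDerivAt_pow 2 y)).add_const 3).fun_div (hasDerivAt_pow 5 y) (pow_ne_zero 5 hy0))).fun_sub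
      (hasDerivAt_gaussianTail y)).congr_deriv ?_
    field_simp
    ring
  have hlim : Tendsto K atTop (𝓝 0) := by
    have hmain : Tendsto (fun y => gaussian y * ((y ^ 4 - y ^ 2 + 3) / y ^ 5)) atTop (𝓝 0) := by
      refine squeeze_zero' ((eventually_gt_atTop 0).mono fun y hy => ?_)
        ((eventually_ge_atTop 2).mono fun y hy => ?_) tendsto_gaussian_atTop
      · exact mul_nonneg (gaussian_pos y).le
          (div_nonneg (pow_four_sub_sq_add_three_pos y).le (by positivity))
      · refine mul_le_of_le_one_right (gaussian_pos y).le ((div_le_one (by positivity)).2 ?_)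
        have hy4 : 0 ≤ y ^ 4 := by positivity
        nlinarith [mul_le_mul_of_nonneg_right hy hy4]
    simpa using hmain.sub tendsto_gaussianTail_atTop
  have := pos_of_hasDerivAt_neg_of_tendsto_zero hderiv
    (fun y hy => div_neg_of_neg_of_pos (by linarith [gaussian_pos y]) (pow_pos hy 6)) hlim hx
  simp only [K] at this
  linarith

theorem mul_alphaConst_lt_one (τ : ℝ) : τ * alphaConst τ < 1 := by
  have hQ := gaussianTail_pos τ
  have h : τ * (gaussian τ / gaussianTail τ) < τ ^ 2 + 1 := by
    rw [mul_div_assoc', div_lt_iff₀ hQ]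
    exact mul_gaussian_lt_sq_add_one_mul_gaussianTail τ
  rw [alphaConst_eq]
  nlinarith

theorem one_sub_three_div_sq_lt_mul_alphaConst {τ : ℝ} (hτ : 0 < τ) :
    1 - 3 / τ ^ 2 < τ * alphaConst τ := by
  set p := τ ^ 4 - τ ^ 2 + 3
  have hp : 0 < p := pow_four_sub_sq_add_three_pos τ
  have hm : τ ^ 5 / p < gaussian τ / gaussianTail τ := by
    rw [div_lt_div_iff₀ hp (gaussianTail_pos τ), mul_comm]
    have := gaussianTail_lt_gaussian_mul hτ
    rw [mul_div_assoc', lt_div_iff₀ (by positivity)] at this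
    exact this
  have hgap : τ * (τ ^ 5 / p - τ) - (1 - 3 / τ ^ 2) = (τ ^ 2 - 3) ^ 2 / (τ ^ 2 * p) := by
    field_simp
    ring
  calc 1 - 3 / τ ^ 2 ≤ τ * (τ ^ 5 / p - τ) := by
        have : 0 ≤ (τ ^ 2 - 3) ^ 2 / (τ ^ 2 * p) := by positivity
        linarith
    _ < τ * alphaConst τ := by
        rw [alphaConst_eq]
        gcongr

theorem tendsto_alphaConst_div_one_div_atTop :
    Tendsto (fun τ => alphaConst τ / (1 / τ)) atTop (𝓝 1) := by
  have hlower : Tendsto (fun τ : ℝ => 1 - 3 / τ ^ 2) atTop (𝓝 1) := by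
    simpa using tendsto_const_nhds.sub
      ((tendsto_const_nhds (x := (3 : ℝ))).div_atTop (tendsto_pow_atTop two_ne_zero))
  refine tendsto_of_tendsto_of_tendsto_of_le_of_le' hlower tendsto_const_nhds ?_
    (Eventually.of_forall fun τ => ?_)
  · filter_upwards [eventually_gt_atTop 0] with τ hτ
    rw [div_div_eq_mul_div, div_one, mul_comm]
    exact (one_sub_three_div_sq_lt_mul_alphaConst hτ).le
  · rw [div_div_eq_mul_div, div_one, mul_comm]
    exact (mul_alphaConst_lt_one τ).le

theorem alphaConst_properties :
    (∀ τ : ℝ, 0 < alphaConst τ) ∧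
    StrictAnti alphaConst ∧
    Tendsto (fun τ : ℝ => alphaConst τ / (-τ)) atBot (nhds 1) ∧
    Tendsto (fun τ : ℝ => alphaConst τ / (1 / τ)) atTop (nhds 1) :=
  ⟨alphaConst_pos, alphaConst_strictAnti, tendsto_alphaConst_div_neg_atBot,
    tendsto_alphaConst_div_one_div_atTop⟩
end
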